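/- arXiv:q-bio/0511034 — 2 statements merged into one kernel-verified Lean document; each statement's English description precedes it below -/
import Mathlib

section
/- Let n ≥ 1, let Q be an n×n complex matrix that is diagonalizable: Q = U D U⁻¹ with U invertible and D diagonal with diagonal entries λ_1, …, λ_n. Fix T > 0 and define, for indices i, j, the quantity J_{ij} = (e^{T λ_i} − e^{T λ_j}) / (λ_i − λ_j) if λ_i ≠ λ_j, and J_{ij} = T e^{T λ_i} if λ_i = λ_j. Then for any indices a, b, c, d, the integral ∫₀^T (exp(tQ))_{ab} · (exp((T−t)Q))_{cd} dt equals Σ_{i=1}^n Σ_{j=1}^n U_{ai} (U⁻¹)_{ib} U_{cj} (U⁻¹)_{jd} J_{ij}, where exp denotes the matrix exponential. -/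
open scoped BigOperators

lemma exp_smul_entry {n : ℕ} (U : Matrix (Fin n) (Fin n) ℂ) (hU : IsUnit U.det)
    (lam : Fin n → ℂ) (s : ℂ) (a b : Fin n) :
    (NormedSpace.exp (s • (U * Matrix.diagonal lam * U⁻¹))) a b
      = ∑ i, U a i * Complex.exp (s * lam i) * U⁻¹ i b := by
  have hU' : IsUnit U := (Matrix.isUnit_iff_isUnit_det _).mpr hU
  have hd : Matrix.diagonal (fun i => s * lam i) = s • Matrix.diagonal lam := by
    ext i j
    by_cases h : i = j <;> simp [Matrix.diagonal, h]
  have h1 : s • (U * Matrix.diagonal lam * U⁻¹)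
      = U * Matrix.diagonal (fun i => s * lam i) * U⁻¹ := by
    rw [hd, Matrix.mul_smul, Matrix.smul_mul]
  rw [h1, Matrix.exp_conj U _ hU', Matrix.exp_diagonal]
  rw [Matrix.mul_apply]
  refine Finset.sum_congr rfl fun i _ => ?_
  rw [Matrix.mul_diagonal]
  simp [Pi.coe_exp, ← Complex.exp_eq_exp_ℂ]

set_option maxHeartbeats 1000000 in
/-- **Evaluation of the E-step integral via an eigenvalue decomposition.**
If `Q = U D U⁻¹` with `D = diagonal λ`, and
`J i j = (e^{Tλᵢ} - e^{Tλⱼ})/(λᵢ - λⱼ)` for `λᵢ ≠ λⱼ`, `J i j = T e^{Tλᵢ}` otherwise,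
then `∫₀^T (e^{tQ})_{ab} (e^{(T-t)Q})_{cd} dt = ∑ᵢ∑ⱼ U_{ai} U⁻¹_{ib} U_{cj} U⁻¹_{jd} J_{ij}`. -/
theorem integral_matrix_exp_entries_eq_sum
    {n : ℕ} (hn : 1 ≤ n)
    (Q U : Matrix (Fin n) (Fin n) ℂ) (hU : IsUnit U.det)
    (lam : Fin n → ℂ)
    (hQ : Q = U * Matrix.diagonal lam * U⁻¹)
    (T : ℝ) (hT : 0 < T)
    (J : Fin n → Fin n → ℂ)
    (hJ : ∀ i j, J i j =
      if lam i = lam j then (T : ℂ) * Complex.exp ((T : ℂ) * lam i)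
      else (Complex.exp ((T : ℂ) * lam i) - Complex.exp ((T : ℂ) * lam j)) /
        (lam i - lam j))
    (a b c d : Fin n) :
    (∫ t in (0:ℝ)..T,
        (NormedSpace.exp ((t : ℂ) • Q)) a b *
          (NormedSpace.exp (((T - t : ℝ) : ℂ) • Q)) c d)
      = ∑ i, ∑ j, U a i * U⁻¹ i b * U c j * U⁻¹ j d * J i j := by
  subst hQ
  obtain ⟨g, hg⟩ : ∃ g : Fin n → Fin n → ℝ → ℂ, ∀ i j (t : ℝ), g i j t =
      U a i * U⁻¹ i b * U c j * U⁻¹ j d *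
        (Complex.exp ((t : ℂ) * lam i) * Complex.exp (((T - t : ℝ) : ℂ) * lam j)) :=
    ⟨_, fun _ _ _ => rfl⟩
  have key : ∀ t : ℝ,
      (NormedSpace.exp ((t : ℂ) • (U * Matrix.diagonal lam * U⁻¹))) a b *
        (NormedSpace.exp (((T - t : ℝ) : ℂ) • (U * Matrix.diagonal lam * U⁻¹))) c d
      = ∑ i, ∑ j, g i j t := by
    intro t
    rw [exp_smul_entry U hU lam _ a b, exp_smul_entry U hU lam _ c d,
      Finset.sum_mul_sum]
    refine Finset.sum_congr rfl fun i _ => Finset.sum_congr rfl fun j _ => ?_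
    rw [hg]
    ring
  have hInt : ∀ (i j : Fin n), IntervalIntegrable (g i j) MeasureTheory.volume 0 T := by
    intro i j
    apply Continuous.intervalIntegrable
    have : g i j = fun t : ℝ => U a i * U⁻¹ i b * U c j * U⁻¹ j d *
        (Complex.exp ((t : ℂ) * lam i) * Complex.exp (((T - t : ℝ) : ℂ) * lam j)) :=
      funext (hg i j)
    rw [this]
    fun_prop
  have hsumInt : ∀ i, IntervalIntegrable (fun t => ∑ j, g i j t)
      MeasureTheory.volume 0 T := by
    intro i
    have h := IntervalIntegrable.sum (μ := MeasureTheory.volume) (a := 0) (b := T)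
      Finset.univ (f := fun j => g i j) (fun j _ => hInt i j)
    have e : (∑ j : Fin n, g i j) = fun t => ∑ j, g i j t := by
      funext t; simp [Finset.sum_apply]
    rwa [e] at h
  rw [intervalIntegral.integral_congr (g := fun t => ∑ i, ∑ j, g i j t) (fun t _ => key t)]
  rw [intervalIntegral.integral_finset_sum (f := fun i t => ∑ j, g i j t)
    (fun i _ => hsumInt i)]
  refine Finset.sum_congr rfl fun i _ => ?_
  rw [intervalIntegral.integral_finset_sum (fun j _ => hInt i j)]
  refine Finset.sum_congr rfl fun j _ => ?_
  have hrw : (∫ t in (0:ℝ)..T, g i j t) = ∫ t in (0:ℝ)..T,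
      U a i * U⁻¹ i b * U c j * U⁻¹ j d *
        (Complex.exp ((t : ℂ) * lam i) * Complex.exp (((T - t : ℝ) : ℂ) * lam j)) :=
    intervalIntegral.integral_congr (fun t _ => hg i j t)
  rw [hrw, intervalIntegral.integral_const_mul]
  congr 1
  rw [hJ i j]
  by_cases h : lam i = lam j
  · rw [if_pos h]
    have : ∀ t : ℝ, Complex.exp ((t : ℂ) * lam i) * Complex.exp (((T - t : ℝ) : ℂ) * lam j)
        = Complex.exp ((T : ℂ) * lam i) := by
      intro t
      rw [← Complex.exp_add, h]
      push_cast
      ring_nf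
    rw [intervalIntegral.integral_congr (g := fun _ => Complex.exp ((T : ℂ) * lam i))
      (fun t _ => this t), intervalIntegral.integral_const]
    simp [mul_comm]
  · rw [if_neg h]
    have hc : lam i - lam j ≠ 0 := sub_ne_zero.mpr h
    have : ∀ t : ℝ, Complex.exp ((t : ℂ) * lam i) * Complex.exp (((T - t : ℝ) : ℂ) * lam j)
        = Complex.exp ((T : ℂ) * lam j) * Complex.exp ((lam i - lam j) * (t : ℂ)) := by
      intro t
      rw [← Complex.exp_add, ← Complex.exp_add]
      push_cast
      ring_nf
    rw [intervalIntegral.integral_congr (g := fun t : ℝ =>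
        Complex.exp ((T : ℂ) * lam j) * Complex.exp ((lam i - lam j) * (t : ℂ)))
      (fun t _ => this t),
      intervalIntegral.integral_const_mul, integral_exp_mul_complex hc]
    have e1 : Complex.exp ((lam i - lam j) * ((0:ℝ):ℂ)) = 1 := by norm_num
    have e2 : Complex.exp ((T:ℂ) * lam j) * Complex.exp ((lam i - lam j) * (T:ℂ))
        = Complex.exp ((T:ℂ) * lam i) := by
      rw [← Complex.exp_add]; ring_nf
    rw [e1, mul_div_assoc', mul_sub, mul_one, e2]
end

section
/- (Map between edge lengths, internal edges.) Let Γ be a binary tree, that is, a finite connected acyclic simple graph in which every vertex has degree 1 or 3, with leaf set Ω of cardinality n, equipped with a positive edge length function w. For R ⊆ Ω let D(R) be the subtree distance (the sum of w over all edges lying on the unique path between some pair of leaves in R), let 2 ≤ m ≤ n − 2, let d̃(i,j) = Σ_{Λ ∈ binom(Ω\{i,j}, m−2)} D({i,j} ∪ Λ), and let w̃ be the positive edge length function on Γ whose path sums between leaves realize d̃. Then for every internal edge e of Γ (an edge joining two degree-3 vertices), if deleting e from Γ splits the leaf set Ω into two parts of sizes p and q (with p + q = n, p ≥ 2, q ≥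 2), the lengths satisfy w(e) = 2 w̃(e) / ( C(p−2, m−2) + C(q−2, m−2) ), where C(·,·) denotes the binomial coefficient. -/
open SimpleGraph Finset
open scoped Classical

set_option linter.unusedSectionVars false
set_option maxHeartbeats 1000000

namespace LYPaux

variable {V : Type*} [Fintype V] [DecidableEq V] {G : SimpleGraph V} [DecidableRel G.Adj]

lemma reach_of_mem_support {H : SimpleGraph V} {x y z : V} (W : H.Walk x y)
    (hz : z ∈ W.support) : H.Reachable x z := ⟨W.takeUntil z hz⟩

lemma mem_support_of_mem_edges {H : SimpleGraph V} {x y t : V} (W : H.Walk x y)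
    {g : Sym2 V} (hg : g ∈ W.edges) (ht : t ∈ g) : t ∈ W.support := by
  induction g with
  | _ x' y' =>
    rw [Sym2.mem_iff] at ht
    rcases ht with rfl | rfl
    · exact W.fst_mem_support_of_mem_edges hg
    · exact W.snd_mem_support_of_mem_edges hg

/-- Transfer reachability from one edge-deleted graph to another, provided some vertex of the
new deleted edge is unreachable. -/
lemma reach_transfer {f : Sym2 V} {c x t : V} (g : Sym2 V) (htg : t ∈ g)
    (h : (G.deleteEdges {f}).Reachable c x)
    (ht : ¬ (G.deleteEdges {f}).Reachable c t) :
    (G.deleteEdges {g}).Reachable c x := by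
  obtain ⟨W⟩ := h
  have htW : t ∉ W.support := fun hmem => ht (reach_of_mem_support W hmem)
  have hgW : g ∉ W.edges := fun hmem => htW (mem_support_of_mem_edges W hmem htg)
  have hsub : ∀ e ∈ W.edges, e ∈ G.edgeSet := by
    intro e he
    have := W.edges_subset_edgeSet he
    rw [edgeSet_deleteEdges] at this
    exact this.1
  refine ⟨(W.transfer G hsub).toDeleteEdges {g} ?_⟩
  intro e he heg
  rw [Set.mem_singleton_iff] at heg
  rw [Walk.edges_transfer] at he
  exact hgW (heg ▸ he)

lemma bridge_not_reachable (hacyc : G.IsAcyclic) {a b : V} (hab : G.Adj a b) :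
    ¬ (G.deleteEdges {s(a,b)}).Reachable a b :=
  ((isAcyclic_iff_forall_adj_isBridge.mp hacyc) hab)

/-- Each branch at a vertex contains a leaf. -/
lemma branch_leaf (hacyc : G.IsAcyclic) (hdeg : ∀ v, G.degree v = 1 ∨ G.degree v = 3) :
    ∀ (N : ℕ) (u a : V), G.Adj u a →
    (univ.filter fun z => (G.deleteEdges {s(u,a)}).Reachable a z).card ≤ N →
    ∃ x, G.degree x = 1 ∧ (G.deleteEdges {s(u,a)}).Reachable a x := by
  intro N
  induction N with
  | zero =>
    intro u a hua hcard
    exfalso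
    have : a ∈ univ.filter fun z => (G.deleteEdges {s(u,a)}).Reachable a z := by
      simp [Reachable.refl]
    have := Finset.card_pos.mpr ⟨a, this⟩
    omega
  | succ N ih =>
    intro u a hua hcard
    rcases hdeg a with h1 | h3
    · exact ⟨a, h1, Reachable.refl _⟩
    · obtain ⟨c, hc_mem, hcu⟩ := Finset.exists_mem_ne
        (s := G.neighborFinset a) (by rw [card_neighborFinset_eq_degree, h3]; omega) u
      have hac : G.Adj a c := by rwa [mem_neighborFinset] at hc_mem
      have hbridge : ¬ (G.deleteEdges {s(a,c)}).Reachable a c := bridge_not_reachable hacyc hac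
      have hnotca : ¬ (G.deleteEdges {s(a,c)}).Reachable c a := fun h => hbridge h.symm
      have hne : s(a, c) ≠ s(u, a) := by
        intro h
        rw [Sym2.eq_iff] at h
        rcases h with ⟨h1, _⟩ | ⟨_, h2⟩
        · exact hua.ne h1.symm
        · exact hcu h2
      have hadj : (G.deleteEdges {s(u,a)}).Adj a c := by
        rw [deleteEdges_adj]
        exact ⟨hac, by simpa using hne⟩
      have hsub : (univ.filter fun z => (G.deleteEdges {s(a,c)}).Reachable c z) ⊆
          (univ.filter fun z => (G.deleteEdges {s(u,a)}).Reachable a z).erase a := by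
        intro z hz
        simp only [mem_filter, mem_univ, true_and] at hz
        refine Finset.mem_erase.mpr ⟨fun h => hnotca (h ▸ hz), ?_⟩
        simp only [mem_filter, mem_univ, true_and]
        have h2 : (G.deleteEdges {s(u,a)}).Reachable c z :=
          reach_transfer s(u,a) (by simp) hz hnotca
        exact hadj.reachable.trans h2
      have hamem : a ∈ univ.filter fun z => (G.deleteEdges {s(u,a)}).Reachable a z := by
        simp [Reachable.refl]
      have hcard2 : (univ.filter fun z => (G.deleteEdges {s(a,c)}).Reachable c z).card ≤ N := by
        have h1 := Finset.card_le_card hsub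
        rw [Finset.card_erase_of_mem hamem] at h1
        have := Finset.card_pos.mpr ⟨a, hamem⟩
        omega
      obtain ⟨x, hx1, hx2⟩ := ih a c hac hcard2
      have h2 : (G.deleteEdges {s(u,a)}).Reachable c x :=
        reach_transfer s(u,a) (by simp) hx2 hnotca
      exact ⟨x, hx1, hadj.reachable.trans h2⟩



lemma walk_sides {a b : V} {x y : V} (W : G.Walk x y) :
    (G.deleteEdges {s(a,b)}).Reachable x y ∨
      ((G.deleteEdges {s(a,b)}).Reachable x a ∨ (G.deleteEdges {s(a,b)}).Reachable x b) := by
  induction W with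
  | nil => exact Or.inl (Reachable.refl _)
  | @cons x c t hxc W ih =>
    by_cases hf : s(x, c) = s(a, b)
    · rw [Sym2.eq_iff] at hf
      rcases hf with ⟨rfl, rfl⟩ | ⟨rfl, rfl⟩
      · exact Or.inr (Or.inl (Reachable.refl _))
      · exact Or.inr (Or.inr (Reachable.refl _))
    · have hadj : (G.deleteEdges {s(a,b)}).Adj x c := by
        rw [deleteEdges_adj]
        exact ⟨hxc, by simpa using hf⟩
      rcases ih with h | h | h
      · exact Or.inl (hadj.reachable.trans h)
      · exact Or.inr (Or.inl (hadj.reachable.trans h))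
      · exact Or.inr (Or.inr (hadj.reachable.trans h))

/-- Every vertex is on one of the two sides of an edge. -/
lemma two_sides (hconn : G.Connected) {a b : V} (z : V) :
    (G.deleteEdges {s(a,b)}).Reachable z a ∨ (G.deleteEdges {s(a,b)}).Reachable z b := by
  obtain ⟨W⟩ := hconn z a
  rcases walk_sides (a := a) (b := b) W with h | h
  · exact Or.inl h
  · exact h

lemma same_side_of_not (hconn : G.Connected) {a b : V}
    {x y z : V} (hxy : ¬ (G.deleteEdges {s(a,b)}).Reachable x y)
    (hxz : ¬ (G.deleteEdges {s(a,b)}).Reachable x z) :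
    (G.deleteEdges {s(a,b)}).Reachable y z := by
  rcases two_sides hconn (a := a) (b := b) x with hx | hx
  · rcases two_sides hconn (a := a) (b := b) y with hy | hy
    · exact absurd (hx.trans hy.symm) hxy
    · rcases two_sides hconn (a := a) (b := b) z with hz | hz
      · exact absurd (hx.trans hz.symm) hxz
      · exact hy.trans hz.symm
  · rcases two_sides hconn (a := a) (b := b) y with hy | hy
    · rcases two_sides hconn (a := a) (b := b) z with hz | hz
      · exact hy.trans hz.symm
      · exact absurd (hx.trans hz.symm) hxz
    · exact absurd (hx.trans hy.symm) hxy



lemma edge_mem_path_iff (hacyc : G.IsAcyclic) {x y : V} (P : G.Walk x y) (hP : P.IsPath)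
    (f : Sym2 V) : f ∈ P.edges ↔ ¬ (G.deleteEdges {f}).Reachable x y := by
  constructor
  · intro hf hr
    obtain ⟨Q⟩ := hr
    set Q' := Q.toPath with hQ'
    have hsub : ∀ e ∈ (Q' : (G.deleteEdges {f}).Walk x y).edges, e ∈ G.edgeSet := by
      intro e he
      have := (Q' : (G.deleteEdges {f}).Walk x y).edges_subset_edgeSet he
      rw [edgeSet_deleteEdges] at this
      exact this.1
    have hT : ((Q' : (G.deleteEdges {f}).Walk x y).transfer G hsub).IsPath :=
      (Q'.2).transfer hsub
    have huniq := hacyc.path_unique ⟨P, hP⟩ ⟨_, hT⟩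
    have : f ∈ ((Q' : (G.deleteEdges {f}).Walk x y).transfer G hsub).edges := by
      rw [← congrArg (fun (p : G.Path x y) => f ∈ (p : G.Walk x y).edges) huniq]
      exact hf
    rw [SimpleGraph.Walk.edges_transfer] at this
    have := (Q' : (G.deleteEdges {f}).Walk x y).edges_subset_edgeSet this
    rw [edgeSet_deleteEdges] at this
    exact this.2 rfl
  · intro hr
    by_contra hf
    exact hr ⟨P.toDeleteEdges {f}
      (by intro e he h; rw [Set.mem_singleton_iff] at h; exact hf (h ▸ he))⟩

lemma support_same_side (hacyc : G.IsAcyclic) {x y z : V} (f : Sym2 V)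
    (hr : (G.deleteEdges {f}).Reachable x y) (P : G.Walk x y) (hP : P.IsPath)
    (hz : z ∈ P.support) : (G.deleteEdges {f}).Reachable x z := by
  have hf : f ∉ P.edges := by
    rw [edge_mem_path_iff hacyc P hP f]; exact not_not_intro hr
  refine ⟨(P.takeUntil z hz).toDeleteEdges {f} ?_⟩
  intro e he hef
  rw [Set.mem_singleton_iff] at hef
  exact hf (hef ▸ P.edges_takeUntil_subset hz he)

/-- Pick two leaves on the `u`-side of the internal edge `s(u,v)` whose joining path
passes through `u`. -/
lemma pick_side_leaves (hconn : G.Connected) (hacyc : G.IsAcyclic)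
    (hdeg : ∀ v, G.degree v = 1 ∨ G.degree v = 3) {u v : V} (huv : G.Adj u v)
    (hu : G.degree u = 3) :
    ∃ i j : V, G.degree i = 1 ∧ G.degree j = 1 ∧
      (G.deleteEdges {s(u,v)}).Reachable u i ∧ (G.deleteEdges {s(u,v)}).Reachable u j ∧
      i ≠ j ∧ ∀ (P : G.Walk i j), P.IsPath → u ∈ P.support := by
  have hvmem : v ∈ G.neighborFinset u := by rwa [mem_neighborFinset]
  have hcard : 1 < ((G.neighborFinset u).erase v).card := by
    rw [Finset.card_erase_of_mem hvmem, card_neighborFinset_eq_degree, hu]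
    omega
  obtain ⟨a, ha, b, hb, hab⟩ := Finset.one_lt_card.mp hcard
  obtain ⟨hav, ha'⟩ := Finset.mem_erase.mp ha
  obtain ⟨hbv, hb'⟩ := Finset.mem_erase.mp hb
  have hua : G.Adj u a := by rwa [mem_neighborFinset] at ha'
  have hub : G.Adj u b := by rwa [mem_neighborFinset] at hb'
  have hnua : s(u, a) ≠ s(u, v) := by
    intro h; rw [Sym2.eq_iff] at h
    rcases h with ⟨_, h⟩ | ⟨h, _⟩
    · exact hav h
    · exact huv.ne h
  have hnub : s(u, b) ≠ s(u, v) := by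
    intro h; rw [Sym2.eq_iff] at h
    rcases h with ⟨_, h⟩ | ⟨h, _⟩
    · exact hbv h
    · exact huv.ne h
  have hnba : s(u, b) ≠ s(u, a) := by
    intro h; rw [Sym2.eq_iff] at h
    rcases h with ⟨_, h⟩ | ⟨h, _⟩
    · exact hab (h ▸ rfl)
    · exact hua.ne h
  obtain ⟨i, hi1, hi2⟩ := branch_leaf hacyc hdeg
    (univ.filter fun z => (G.deleteEdges {s(u,a)}).Reachable a z).card u a hua le_rfl
  obtain ⟨j, hj1, hj2⟩ := branch_leaf hacyc hdeg
    (univ.filter fun z => (G.deleteEdges {s(u,b)}).Reachable b z).card u b hub le_rfl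
  have hnau : ¬ (G.deleteEdges {s(u,a)}).Reachable a u :=
    fun h => bridge_not_reachable hacyc hua h.symm
  have hnbu : ¬ (G.deleteEdges {s(u,b)}).Reachable b u :=
    fun h => bridge_not_reachable hacyc hub h.symm
  -- reach u i in G - s(u,v)
  have hADJa : (G.deleteEdges {s(u,v)}).Adj u a := by
    rw [deleteEdges_adj]; exact ⟨hua, by simpa using hnua⟩
  have hADJb : (G.deleteEdges {s(u,v)}).Adj u b := by
    rw [deleteEdges_adj]; exact ⟨hub, by simpa using hnub⟩
  have hi_e : (G.deleteEdges {s(u,v)}).Reachable u i :=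
    hADJa.reachable.trans (reach_transfer s(u,v) (by simp) hi2 hnau)
  have hj_e : (G.deleteEdges {s(u,v)}).Reachable u j :=
    hADJb.reachable.trans (reach_transfer s(u,v) (by simp) hj2 hnbu)
  -- j is on the u-side of s(u,a)
  have hADJba : (G.deleteEdges {s(u,a)}).Adj u b := by
    rw [deleteEdges_adj]; exact ⟨hub, by simpa using hnba⟩
  have hj_a : (G.deleteEdges {s(u,a)}).Reachable u j :=
    hADJba.reachable.trans (reach_transfer s(u,a) (by simp) hj2 hnbu)
  have hsep : ¬ (G.deleteEdges {s(u,a)}).Reachable i j := by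
    intro h
    exact hnau (hi2.trans (h.trans hj_a.symm))
  refine ⟨i, j, hi1, hj1, hi_e, hj_e, ?_, ?_⟩
  · rintro rfl; exact hsep (Reachable.refl _)
  · intro P hP
    have : s(u, a) ∈ P.edges := (edge_mem_path_iff hacyc P hP _).mpr hsep
    exact P.fst_mem_support_of_mem_edges this

lemma cross_not_reach (hacyc : G.IsAcyclic) {u v x y : V} (huv : G.Adj u v)
    (hx : (G.deleteEdges {s(u,v)}).Reachable u x) (hy : (G.deleteEdges {s(u,v)}).Reachable v y) :
    ¬ (G.deleteEdges {s(u,v)}).Reachable x y :=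
  fun h => bridge_not_reachable hacyc huv (hx.trans (h.trans hy.symm))

lemma cross_support (hacyc : G.IsAcyclic) {u v x y : V} (huv : G.Adj u v)
    (hx : (G.deleteEdges {s(u,v)}).Reachable u x) (hy : (G.deleteEdges {s(u,v)}).Reachable v y)
    (P : G.Walk x y) (hP : P.IsPath) : u ∈ P.support ∧ v ∈ P.support := by
  have h : s(u, v) ∈ P.edges :=
    (edge_mem_path_iff hacyc P hP _).mpr (cross_not_reach hacyc huv hx hy)
  exact ⟨P.fst_mem_support_of_mem_edges h, P.snd_mem_support_of_mem_edges h⟩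

/-- The condition that a set of vertices spans a given (deleted) edge. -/
def lypCond {V : Type*} (G : SimpleGraph V) (f : Sym2 V) (R : Finset V) : Prop :=
  ∃ a ∈ R, ∃ b ∈ R, ¬ (G.deleteEdges {f}).Reachable a b

lemma lypCond_iff {V : Type*} (G : SimpleGraph V) (f : Sym2 V) (R : Finset V) :
    lypCond G f R ↔ ∃ a ∈ R, ∃ b ∈ R, ¬ (G.deleteEdges {f}).Reachable a b := Iff.rfl

attribute [irreducible] lypCond

/-- The basic counting lemma. -/
lemma count_split {α : Type*} [DecidableEq α] (B S : Finset α) (k : ℕ) (pred : Finset α → Prop)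
    (hSB : S ⊆ B) (h : ∀ Λ ∈ B.powersetCard k, pred Λ ↔ ¬ Λ ⊆ S) :
    ((B.powersetCard k).filter pred).card = B.card.choose k - S.card.choose k := by
  have h1 : (B.powersetCard k).filter (fun Λ => ¬ pred Λ) = S.powersetCard k := by
    ext Λ
    simp only [mem_filter, mem_powersetCard]
    constructor
    · rintro ⟨⟨hsub, hcard⟩, hnp⟩
      have := (h Λ (mem_powersetCard.mpr ⟨hsub, hcard⟩)).not.mp hnp
      rw [not_not] at this
      exact ⟨this, hcard⟩
    · rintro ⟨hsub, hcard⟩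
      have hsub' : Λ ⊆ B := hsub.trans hSB
      refine ⟨⟨hsub', hcard⟩, ?_⟩
      rw [(h Λ (mem_powersetCard.mpr ⟨hsub', hcard⟩)), not_not]
      exact hsub
  have h2 := Finset.card_filter_add_card_filter_not (p := pred) (s := B.powersetCard k)
  rw [h1, Finset.card_powersetCard, Finset.card_powersetCard] at h2
  have h3 : S.card.choose k ≤ B.card.choose k :=
    Nat.choose_le_choose k (Finset.card_le_card hSB)
  omega

end LYPaux


open SimpleGraph Finset LYPaux in
open scoped Classical in
/-- **Map between edge lengths: internal edges (Levy–Yoshida–Pachter).**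
With `Γ`, `w`, `D`, `m`, `d̃` as in the equivalent-topologies theorem and `w̃` the
positive edge length function on `Γ` realizing `d̃` as path sums between leaves,
for every internal edge `e = {u,v}` (both endpoints of degree 3), if deleting `e`
splits the leaf set into parts of sizes `p` and `q` (`p + q = n`, `p, q ≥ 2`), then
`w e = 2 * w̃ e / (C(p-2, m-2) + C(q-2, m-2))`. -/
theorem map_between_internal_edge_lengths
    {V : Type*} [Fintype V] [DecidableEq V]
    (G : SimpleGraph V) [DecidableRel G.Adj]
    (hconn : G.Connected) (hacyc : G.IsAcyclic)
    (hdeg : ∀ v, G.degree v = 1 ∨ G.degree v = 3)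
    (w : Sym2 V → ℝ) (hw : ∀ e ∈ G.edgeSet, 0 < w e)
    (n : ℕ) (hn : (Finset.univ.filter fun v => G.degree v = 1).card = n)
    (D : Finset V → ℝ)
    (hD : ∀ R : Finset V, D R =
      ∑ e ∈ G.edgeFinset.filter (fun e => ∃ i ∈ R, ∃ j ∈ R,
        ∃ p : G.Walk i j, p.IsPath ∧ e ∈ p.edges), w e)
    (m : ℕ) (hm2 : 2 ≤ m) (hmn : m ≤ n - 2)
    (dt : V → V → ℝ)
    (hdt : ∀ i j : V, G.degree i = 1 → G.degree j = 1 → i ≠ j →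
      dt i j = ∑ Λ ∈ (((Finset.univ.filter fun v => G.degree v = 1).erase i).erase j).powersetCard (m - 2),
        D (insert i (insert j Λ)))
    (wt : Sym2 V → ℝ) (hwtpos : ∀ e ∈ G.edgeSet, 0 < wt e)
    (hwt : ∀ i j : V, G.degree i = 1 → G.degree j = 1 → i ≠ j →
      ∀ p : G.Walk i j, p.IsPath → (p.edges.map wt).sum = dt i j)
    -- an internal edge `{u, v}`:
    (u v : V) (huv : G.Adj u v) (hu : G.degree u = 3) (hv : G.degree v = 3)
    -- the sizes of the two parts into which the leaf set is split by deleting `{u, v}`: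
    (p q : ℕ)
    (hp : p = (Finset.univ.filter fun x =>
      G.degree x = 1 ∧ (G.deleteEdges {s(u, v)}).Reachable u x).card)
    (hq : q = (Finset.univ.filter fun x =>
      G.degree x = 1 ∧ (G.deleteEdges {s(u, v)}).Reachable v x).card)
    (hpq : p + q = n) (hp2 : 2 ≤ p) (hq2 : 2 ≤ q) :
    w s(u, v) = 2 * wt s(u, v) /
      (((p - 2).choose (m - 2) : ℝ) + ((q - 2).choose (m - 2) : ℝ)) := by
  classical
  set L : Finset V := Finset.univ.filter fun v => G.degree v = 1 with hLdef
  -- the `cond` predicate and the counting function `N`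
  set N : V → V → Sym2 V → ℕ := fun x y f =>
    ((((L.erase x).erase y).powersetCard (m-2)).filter
      (fun Λ => lypCond G f (insert x (insert y Λ)))).card with hNdef
  have hes : s(u,v) ∈ G.edgeSet := G.mem_edgeSet.mpr huv
  have hef : s(u,v) ∈ G.edgeFinset := (SimpleGraph.mem_edgeFinset).mpr hes
  -- reformulate D
  have hD' : ∀ R : Finset V, D R = ∑ f ∈ G.edgeFinset, if lypCond G f R then w f else 0 := by
    intro R
    rw [hD, ← Finset.sum_filter]
    congr 1
    apply Finset.filter_congr
    intro f _
    constructor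
    · rintro ⟨a, ha, b, hb, P, hP, hfP⟩
      exact (lypCond_iff G f R).mpr ⟨a, ha, b, hb, (edge_mem_path_iff hacyc P hP f).mp hfP⟩
    · intro hcnd
      obtain ⟨a, ha, b, hb, hr⟩ := (lypCond_iff G f R).mp hcnd
      obtain ⟨W⟩ := hconn a b
      exact ⟨a, ha, b, hb, W.toPath, W.toPath.2,
        (edge_mem_path_iff hacyc W.toPath W.toPath.2 f).mpr hr⟩
  -- dt as a sum of counted edge weights
  have key : ∀ x y : V, G.degree x = 1 → G.degree y = 1 → x ≠ y →
      dt x y = ∑ f ∈ G.edgeFinset, (N x y f : ℝ) * w f := by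
    intro x y hx hy hxy
    rw [hdt x y hx hy hxy]
    rw [Finset.sum_congr rfl (fun Λ _ => hD' (insert x (insert y Λ)))]
    rw [Finset.sum_comm]
    refine Finset.sum_congr rfl (fun f _ => ?_)
    rw [← Finset.sum_filter, Finset.sum_const, nsmul_eq_mul, hNdef]
  -- choose the four leaves
  obtain ⟨i, j, hi1, hj1, hiu, hju, hij, hPij⟩ := pick_side_leaves hconn hacyc hdeg huv hu
  obtain ⟨k, l, hk1, hl1, hkv, hlv, hkl, hPkl⟩ :=
    pick_side_leaves hconn hacyc hdeg huv.symm hv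
  rw [Sym2.eq_swap (a := v) (b := u)] at hkv hlv
  have hiL : i ∈ L := by simp [hLdef, hi1]
  have hjL : j ∈ L := by simp [hLdef, hj1]
  have hkL : k ∈ L := by simp [hLdef, hk1]
  have hlL : l ∈ L := by simp [hLdef, hl1]
  have hneik : ¬ (G.deleteEdges {s(u,v)}).Reachable i k := cross_not_reach hacyc huv hiu hkv
  have hnejl : ¬ (G.deleteEdges {s(u,v)}).Reachable j l := cross_not_reach hacyc huv hju hlv
  have hik : i ≠ k := fun h => hneik (h ▸ Reachable.refl i)
  have hjl : j ≠ l := fun h => hnejl (h ▸ Reachable.refl j)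
  -- chosen paths between all pairs of vertices
  have pth : ∀ x y : V, G.Path x y := fun x y => (Classical.choice (hconn x y)).toPath
  set ρ : V → V → ℝ := fun x y => (((pth x y : G.Walk x y)).edges.map wt).sum with hρdef
  have hρeq : ∀ (x y : V) (P : G.Walk x y), P.IsPath → (P.edges.map wt).sum = ρ x y := by
    intro x y P hP
    have h := hacyc.path_unique ⟨P, hP⟩ (pth x y)
    rw [hρdef]
    exact congrArg (fun (Q : G.Path x y) => ((Q : G.Walk x y).edges.map wt).sum) h
  have hρsymm : ∀ x y : V, ρ x y = ρ y x := by
    intro x y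
    have := hρeq x y ((pth y x : G.Walk y x).reverse) ((pth y x).2.reverse)
    rw [← this, Walk.edges_reverse, List.map_reverse, List.sum_reverse]
  have hρsplit : ∀ (x y z : V), z ∈ (pth x y : G.Walk x y).support →
      ρ x y = ρ x z + ρ z y := by
    intro x y z hz
    set P : G.Walk x y := (pth x y : G.Walk x y) with hPdef
    have htake := (pth x y).2.takeUntil hz
    have hdrop := (pth x y).2.dropUntil hz
    have h1 := hρeq x z (P.takeUntil z hz) htake
    have h2 := hρeq z y (P.dropUntil z hz) hdrop
    have h3 : P = (P.takeUntil z hz).append (P.dropUntil z hz) := (P.take_spec hz).symm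
    have h4 : ρ x y = (P.edges.map wt).sum := rfl
    rw [h4, h3, Walk.edges_append, List.map_append, List.sum_append, h1, h2]
  have hρuv : ρ u v = wt s(u,v) := by
    have := hρeq u v (Path.singleton huv : G.Walk u v) (Path.singleton huv).2
    rw [← this]
    simp [Path.singleton]
  have hρdt : ∀ x y : V, G.degree x = 1 → G.degree y = 1 → x ≠ y → dt x y = ρ x y := by
    intro x y hx hy hxy
    exact (hwt x y hx hy hxy (pth x y : G.Walk x y) (pth x y).2).symm ▸
      (hρeq x y (pth x y : G.Walk x y) (pth x y).2) ▸ rfl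
  -- cardinality facts
  have hLcard : L.card = n := hn
  have hBcard : ∀ x y : V, x ∈ L → y ∈ L → x ≠ y → ((L.erase x).erase y).card = n - 2 := by
    intro x y hx hy hxy
    rw [Finset.card_erase_of_mem (Finset.mem_erase.mpr ⟨hxy.symm, hy⟩),
      Finset.card_erase_of_mem hx, hLcard]
    omega
  -- cross-pair count
  have Ncross : ∀ (f : Sym2 V) (x y : V), x ∈ L → y ∈ L → x ≠ y →
      ¬ (G.deleteEdges {f}).Reachable x y → (N x y f : ℝ) = ((n-2).choose (m-2) : ℝ) := by
    intro f x y hx hy hxy hr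
    simp only [hNdef]
    have : (((L.erase x).erase y).powersetCard (m-2)).filter
        (fun Λ => lypCond G f (insert x (insert y Λ))) =
        ((L.erase x).erase y).powersetCard (m-2) := by
      apply Finset.filter_true_of_mem
      intro Λ _
      exact (lypCond_iff G f _).mpr ⟨x, Finset.mem_insert_self _ _, y,
        Finset.mem_insert_of_mem (Finset.mem_insert_self _ _), hr⟩
    rw [this, Finset.card_powersetCard, hBcard x y hx hy hxy]
  -- same-side pair count
  have Nsame : ∀ (f : Sym2 V) (x y : V), x ∈ L → y ∈ L → x ≠ y →
      (G.deleteEdges {f}).Reachable x y →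
      (N x y f : ℝ) = ((n-2).choose (m-2) : ℝ) -
        (((L.filter (fun z => (G.deleteEdges {f}).Reachable x z)).card - 2).choose (m-2) : ℝ) := by
    intro f x y hx hy hxy hr
    set F : Finset V := L.filter (fun z => (G.deleteEdges {f}).Reachable x z) with hFdef
    have hxF : x ∈ F := Finset.mem_filter.mpr ⟨hx, Reachable.refl _⟩
    have hyF : y ∈ F.erase x := Finset.mem_erase.mpr ⟨hxy.symm, Finset.mem_filter.mpr ⟨hy, hr⟩⟩
    have hSB : (F.erase x).erase y ⊆ (L.erase x).erase y :=
      Finset.erase_subset_erase _ (Finset.erase_subset_erase _ (Finset.filter_subset _ _))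
    have hcount := count_split (B := (L.erase x).erase y) (S := (F.erase x).erase y) (k := m - 2)
      (pred := fun Λ => lypCond G f (insert x (insert y Λ))) hSB ?_
    · have hScard : ((F.erase x).erase y).card = F.card - 2 := by
        rw [Finset.card_erase_of_mem hyF, Finset.card_erase_of_mem hxF]
        omega
      have hle : (F.card - 2).choose (m-2) ≤ (n-2).choose (m-2) := by
        apply Nat.choose_le_choose
        have h1 : F.card ≤ n := by
          rw [← hLcard]; exact Finset.card_filter_le _ _
        omega
      simp only [hNdef]
      rw [hcount, hScard, hBcard x y hx hy hxy]
      push_cast [Nat.cast_sub hle]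
      ring
    · intro Λ hΛ
      obtain ⟨hΛsub, _⟩ := Finset.mem_powersetCard.mp hΛ
      have hmem : ∀ z ∈ Λ, z ≠ x ∧ z ≠ y ∧ z ∈ L := by
        intro z hz
        have h1 := hΛsub hz
        obtain ⟨hzy, h2⟩ := Finset.mem_erase.mp h1
        obtain ⟨hzx, h3⟩ := Finset.mem_erase.mp h2
        exact ⟨hzx, hzy, h3⟩
      have hsubS : Λ ⊆ (F.erase x).erase y ↔
          ∀ z ∈ Λ, (G.deleteEdges {f}).Reachable x z := by
        constructor
        · intro hs z hz
          have := hs hz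
          exact (Finset.mem_filter.mp
            (Finset.mem_of_mem_erase (Finset.mem_of_mem_erase this))).2
        · intro hall z hz
          obtain ⟨hzx, hzy, hzL⟩ := hmem z hz
          exact Finset.mem_erase.mpr ⟨hzy, Finset.mem_erase.mpr
            ⟨hzx, Finset.mem_filter.mpr ⟨hzL, hall z hz⟩⟩⟩
      beta_reduce
      rw [hsubS, lypCond_iff]
      constructor
      · rintro ⟨a, ha, b, hb, hab⟩ hall
        apply hab
        have hreach : ∀ c ∈ insert x (insert y Λ),
            (G.deleteEdges {f}).Reachable x c := by
          intro c hc
          rcases Finset.mem_insert.mp hc with rfl | hc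
          · exact Reachable.refl _
          rcases Finset.mem_insert.mp hc with rfl | hc
          · exact hr
          · exact hall c hc
        exact (hreach a ha).symm.trans (hreach b hb)
      · intro hno
        push_neg at hno
        obtain ⟨z, hz, hnz⟩ := hno
        exact ⟨x, Finset.mem_insert_self _ _, z,
          Finset.mem_insert_of_mem (Finset.mem_insert_of_mem hz), hnz⟩
  -- class invariance of the filter
  have Fcongr : ∀ (f : Sym2 V) (x x' : V), (G.deleteEdges {f}).Reachable x x' →
      L.filter (fun z => (G.deleteEdges {f}).Reachable x z) =
      L.filter (fun z => (G.deleteEdges {f}).Reachable x' z) := by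
    intro f x x' h
    apply Finset.filter_congr
    intro z _
    exact ⟨fun hz => h.symm.trans hz, fun hz => h.trans hz⟩
  -- class invariance of the filter
  have Fcongr : ∀ (f : Sym2 V) (x x' : V), (G.deleteEdges {f}).Reachable x x' →
      L.filter (fun z => (G.deleteEdges {f}).Reachable x z) =
      L.filter (fun z => (G.deleteEdges {f}).Reachable x' z) := by
    intro f x x' h
    apply Finset.filter_congr
    intro z _
    exact ⟨fun hz => h.symm.trans hz, fun hz => h.trans hz⟩
  -- coefficient of the edge s(u,v)
  have hreij : (G.deleteEdges {s(u,v)}).Reachable i j := hiu.symm.trans hju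
  have hrekl : (G.deleteEdges {s(u,v)}).Reachable k l := hkv.symm.trans hlv
  have hFiu : L.filter (fun z => (G.deleteEdges {s(u,v)}).Reachable i z) =
      Finset.univ.filter (fun x => G.degree x = 1 ∧ (G.deleteEdges {s(u, v)}).Reachable u x) := by
    rw [Fcongr s(u,v) i u hiu.symm, hLdef, Finset.filter_filter]
  have hFkv : L.filter (fun z => (G.deleteEdges {s(u,v)}).Reachable k z) =
      Finset.univ.filter (fun x => G.degree x = 1 ∧ (G.deleteEdges {s(u, v)}).Reachable v x) := by
    rw [Fcongr s(u,v) k v hkv.symm, hLdef, Finset.filter_filter]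
  have hcoefe : (N i k s(u,v) : ℝ) + N j l s(u,v) - N i j s(u,v) - N k l s(u,v)
      = ((p - 2).choose (m - 2) : ℝ) + ((q - 2).choose (m - 2) : ℝ) := by
    rw [Ncross s(u,v) i k hiL hkL hik hneik, Ncross s(u,v) j l hjL hlL hjl hnejl,
      Nsame s(u,v) i j hiL hjL hij hreij, Nsame s(u,v) k l hkL hlL hkl hrekl,
      hFiu, hFkv, ← hp, ← hq]
    ring
  -- zero coefficient for every other edge
  have hcoef : ∀ f ∈ G.edgeFinset, f ≠ s(u,v) →
      (N i k f : ℝ) + N j l f - N i j f - N k l f = 0 := by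
    intro f hf hfe
    rw [SimpleGraph.mem_edgeFinset] at hf
    revert hf hfe
    induction f using Sym2.ind with
    | _ a b =>
    intro hf hfe
    have hadj : G.Adj a b := G.mem_edgeSet.mp hf
    -- abbreviation for same-side reachability w.r.t. this edge
    have hruv : (G.deleteEdges {s(a,b)}).Reachable u v := by
      by_contra hcon
      have := (edge_mem_path_iff hacyc (Path.singleton huv : G.Walk u v)
        (Path.singleton huv).2 s(a,b)).mpr hcon
      simp only [Path.singleton, Walk.edges_cons, Walk.edges_nil,
        List.mem_singleton] at this
      exact hfe this
    have Himp : ∀ x y z : V, (G.deleteEdges {s(a,b)}).Reachable x y →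
        z ∈ (pth x y : G.Walk x y).support → (G.deleteEdges {s(a,b)}).Reachable x z :=
      fun x y z h hz => support_same_side hacyc s(a,b) h (pth x y : G.Walk x y) (pth x y).2 hz
    have hI1 : (G.deleteEdges {s(a,b)}).Reachable i j → (G.deleteEdges {s(a,b)}).Reachable i u :=
      fun h => Himp i j u h (hPij (pth i j : G.Walk i j) (pth i j).2)
    have hI2 : (G.deleteEdges {s(a,b)}).Reachable k l → (G.deleteEdges {s(a,b)}).Reachable k v :=
      fun h => Himp k l v h (hPkl (pth k l : G.Walk k l) (pth k l).2)
    have hSik := cross_support hacyc huv hiu hkv (pth i k : G.Walk i k) (pth i k).2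
    have hSjl := cross_support hacyc huv hju hlv (pth j l : G.Walk j l) (pth j l).2
    have hSil := cross_support hacyc huv hiu hlv (pth i l : G.Walk i l) (pth i l).2
    have hSjk := cross_support hacyc huv hju hkv (pth j k : G.Walk j k) (pth j k).2
    have hI3 : (G.deleteEdges {s(a,b)}).Reachable i k →
        (G.deleteEdges {s(a,b)}).Reachable i u := fun h => Himp i k u h hSik.1
    have hI4 : (G.deleteEdges {s(a,b)}).Reachable j l →
        (G.deleteEdges {s(a,b)}).Reachable j u := fun h => Himp j l u h hSjl.1
    have hI5 : (G.deleteEdges {s(a,b)}).Reachable i l →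
        (G.deleteEdges {s(a,b)}).Reachable i u := fun h => Himp i l u h hSil.1
    have hI6 : (G.deleteEdges {s(a,b)}).Reachable j k →
        (G.deleteEdges {s(a,b)}).Reachable j u := fun h => Himp j k u h hSjk.1
    have hI2' : (G.deleteEdges {s(a,b)}).Reachable k l →
        (G.deleteEdges {s(a,b)}).Reachable k v := hI2
    have hTS : ∀ x y z : V, ¬ (G.deleteEdges {s(a,b)}).Reachable x y →
        ¬ (G.deleteEdges {s(a,b)}).Reachable x z → (G.deleteEdges {s(a,b)}).Reachable y z :=
      fun x y z h1 h2 => same_side_of_not hconn h1 h2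
    by_cases hik' : (G.deleteEdges {s(a,b)}).Reachable i k
    · by_cases hij' : (G.deleteEdges {s(a,b)}).Reachable i j
      · by_cases hkl' : (G.deleteEdges {s(a,b)}).Reachable k l
        · -- all four in the same class
          have hjl' : (G.deleteEdges {s(a,b)}).Reachable j l :=
            (hij'.symm.trans hik').trans hkl'
          rw [Nsame s(a,b) i k hiL hkL hik hik', Nsame s(a,b) j l hjL hlL hjl hjl',
            Nsame s(a,b) i j hiL hjL hij hij', Nsame s(a,b) k l hkL hlL hkl hkl',
            Fcongr s(a,b) j i hij'.symm, Fcongr s(a,b) k i hik'.symm]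
          ring
        · -- l alone
          have hil' : ¬ (G.deleteEdges {s(a,b)}).Reachable i l :=
            fun h => hkl' (hik'.symm.trans h)
          have hjl' : ¬ (G.deleteEdges {s(a,b)}).Reachable j l :=
            fun h => hil' (hij'.trans h)
          rw [Nsame s(a,b) i k hiL hkL hik hik', Ncross s(a,b) j l hjL hlL hjl hjl',
            Nsame s(a,b) i j hiL hjL hij hij', Ncross s(a,b) k l hkL hlL hkl hkl']
          ring
      · by_cases hjl' : (G.deleteEdges {s(a,b)}).Reachable j l
        · -- forbidden split {i,k} | {j,l}
          exact absurd ((hI3 hik').trans (hI4 hjl').symm) hij'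
        · -- j alone
          have hji' : ¬ (G.deleteEdges {s(a,b)}).Reachable j i := fun h => hij' h.symm
          have hil' : (G.deleteEdges {s(a,b)}).Reachable i l := hTS j i l hji' hjl'
          have hkl' : (G.deleteEdges {s(a,b)}).Reachable k l := hik'.symm.trans hil'
          rw [Nsame s(a,b) i k hiL hkL hik hik', Ncross s(a,b) j l hjL hlL hjl hjl',
            Ncross s(a,b) i j hiL hjL hij hij', Nsame s(a,b) k l hkL hlL hkl hkl',
            Fcongr s(a,b) k i hik'.symm]
          ring
    · by_cases hij' : (G.deleteEdges {s(a,b)}).Reachable i j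
      · by_cases hkl' : (G.deleteEdges {s(a,b)}).Reachable k l
        · -- forbidden split {i,j} | {k,l}
          exact absurd ((hI1 hij').trans (hruv.trans (hI2 hkl').symm)) hik'
        · -- k alone
          have hki' : ¬ (G.deleteEdges {s(a,b)}).Reachable k i := fun h => hik' h.symm
          have hil' : (G.deleteEdges {s(a,b)}).Reachable i l := hTS k i l hki' hkl'
          have hjl' : (G.deleteEdges {s(a,b)}).Reachable j l := hij'.symm.trans hil'
          rw [Ncross s(a,b) i k hiL hkL hik hik', Nsame s(a,b) j l hjL hlL hjl hjl',
            Nsame s(a,b) i j hiL hjL hij hij', Ncross s(a,b) k l hkL hlL hkl hkl',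
            Fcongr s(a,b) j i hij'.symm]
          ring
      · -- i is separated from j and k
        have hjk' : (G.deleteEdges {s(a,b)}).Reachable j k := hTS i j k hij' hik'
        by_cases hil' : (G.deleteEdges {s(a,b)}).Reachable i l
        · -- forbidden split {i,l} | {j,k}
          exact absurd ((hI5 hil').trans (hI6 hjk').symm) hij'
        · -- i alone
          have hjl' : (G.deleteEdges {s(a,b)}).Reachable j l := hTS i j l hij' hil'
          have hkl' : (G.deleteEdges {s(a,b)}).Reachable k l := hjk'.symm.trans hjl'
          rw [Ncross s(a,b) i k hiL hkL hik hik', Nsame s(a,b) j l hjL hlL hjl hjl',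
            Ncross s(a,b) i j hiL hjL hij hij', Nsame s(a,b) k l hkL hlL hkl hkl',
            Fcongr s(a,b) k j hjk'.symm]
          ring
  -- combine: the quartet combination extracts w(s(u,v))
  have comb : dt i k + dt j l - dt i j - dt k l =
      (((p - 2).choose (m - 2) : ℝ) + ((q - 2).choose (m - 2) : ℝ)) * w s(u,v) := by
    rw [key i k hi1 hk1 hik, key j l hj1 hl1 hjl, key i j hi1 hj1 hij, key k l hk1 hl1 hkl,
      ← Finset.sum_add_distrib, ← Finset.sum_sub_distrib, ← Finset.sum_sub_distrib]
    rw [Finset.sum_eq_single_of_mem s(u,v) hef ?_]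
    · rw [← hcoefe]; ring
    · intro f hfm hfne
      have := hcoef f hfm hfne
      have hfac : (N i k f : ℝ) * w f + (N j l f : ℝ) * w f - (N i j f : ℝ) * w f
          - (N k l f : ℝ) * w f = ((N i k f : ℝ) + N j l f - N i j f - N k l f) * w f := by
        ring
      rw [hfac, this, zero_mul]
  -- the path-sum side
  have huik : u ∈ (pth i k : G.Walk i k).support :=
    (cross_support hacyc huv hiu hkv (pth i k : G.Walk i k) (pth i k).2).1
  have hvuk : v ∈ (pth u k : G.Walk u k).support :=
    (cross_support hacyc huv (Reachable.refl u) hkv (pth u k : G.Walk u k) (pth u k).2).2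
  have hujl : u ∈ (pth j l : G.Walk j l).support :=
    (cross_support hacyc huv hju hlv (pth j l : G.Walk j l) (pth j l).2).1
  have hvul : v ∈ (pth u l : G.Walk u l).support :=
    (cross_support hacyc huv (Reachable.refl u) hlv (pth u l : G.Walk u l) (pth u l).2).2
  have huij : u ∈ (pth i j : G.Walk i j).support := hPij _ (pth i j).2
  have hvkl : v ∈ (pth k l : G.Walk k l).support := hPkl _ (pth k l).2
  have e1 : ρ i k = ρ i u + (ρ u v + ρ v k) := by
    rw [hρsplit i k u huik, hρsplit u k v hvuk]
  have e2 : ρ j l = ρ j u + (ρ u v + ρ v l) := by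
    rw [hρsplit j l u hujl, hρsplit u l v hvul]
  have e3 : ρ i j = ρ i u + ρ u j := hρsplit i j u huij
  have e4 : ρ k l = ρ k v + ρ v l := hρsplit k l v hvkl
  have lhs : dt i k + dt j l - dt i j - dt k l = 2 * wt s(u,v) := by
    rw [hρdt i k hi1 hk1 hik, hρdt j l hj1 hl1 hjl, hρdt i j hi1 hj1 hij,
      hρdt k l hk1 hl1 hkl, e1, e2, e3, e4, ← hρuv]
    rw [hρsymm u j, hρsymm v k]
    ring
  -- conclude
  have hwte : 0 < wt s(u,v) := hwtpos _ hes
  have hwe : 0 < w s(u,v) := hw _ hes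
  have hmain : 2 * wt s(u,v) =
      (((p - 2).choose (m - 2) : ℝ) + ((q - 2).choose (m - 2) : ℝ)) * w s(u,v) := by
    rw [← comb, lhs]
  have hApos : (((p - 2).choose (m - 2) : ℝ) + ((q - 2).choose (m - 2) : ℝ)) ≠ 0 := by
    intro h0
    rw [h0, zero_mul] at hmain
    linarith
  field_simp
  linarith [hmain, mul_comm (w s(u,v)) (((p - 2).choose (m - 2) : ℝ) + ((q - 2).choose (m - 2) : ℝ))]
end
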